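/- With h = max{j : α_j ≤ δ}: Σ_{j=h+1}^n Λ_j = Σ_{j=h+1}^n α_j ( f(V \ V_{j−1}) − f(V \ V_j) ) − δ ( f(V \ V_h) − f(∅) ), where Λ_j is as defined from the piecewise-constant integral over (δ, α_j]. -/

import Mathlib

/-!
Let `β` agree with `α` except `β_h = δ`. Then every `Λ_j` has the uniform shape
`Σ_{k=h+1}^n (β_k - β_{k-1}) (f(V_{k,j}) - f(V_{k,j-1}))`. Summing over `j` first, the inner sum
telescopes to `f(V \ V_{k-1}) - f(∅)`, and summation by parts in `k` turns
`Σ_k (β_k - β_{k-1}) f(V \ V_{k-1})` into `Σ_k β_k (f(V \ V_{k-1}) - f(V \ V_k)) - β_h f(V \ V_h)`.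
-/

open Finset

theorem Finset.sum_Icc_succ_sub_pred {M : Type*} [AddCommGroup M] (g : ℕ → M) {m n : ℕ}
    (hmn : m ≤ n) : ∑ j ∈ Icc (m + 1) n, (g j - g (j - 1)) = g n - g m := by
  rw [← Ico_add_one_right_eq_Icc, ← sum_Ico_add' (fun j => g j - g (j - 1))]
  simpa using sum_Ico_sub g hmn

theorem Finset.sum_Icc_sub_pred_mul {R : Type*} [CommRing R] (a F : ℕ → R) {m n : ℕ}
    (hmn : m ≤ n) :
    ∑ j ∈ Icc (m + 1) n, (a j - a (j - 1)) * F (j - 1) =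
      ∑ j ∈ Icc (m + 1) n, a j * (F (j - 1) - F j) + (a n * F n - a m * F m) := by
  rw [← sum_Icc_succ_sub_pred (fun j => a j * F j) hmn, ← sum_add_distrib]
  exact sum_congr rfl fun _ _ => by ring

theorem Finset.sum_Icc_succ_eq_add_sum_Icc {M : Type*} [AddCommMonoid M] (g : ℕ → M) {m n : ℕ}
    (hmn : m < n) : ∑ k ∈ Icc (m + 1) n, g k = g (m + 1) + ∑ k ∈ Icc (m + 2) n, g k := by
  rw [Icc_eq_cons_Ioc (by omega), sum_cons, ← Icc_add_one_left_eq_Ioc]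
  rfl

theorem Fin.setOf_le_val_and_val_lt_n {n : ℕ} (k : ℕ) :
    {v : Fin n | k ≤ v.val ∧ v.val < n} = {v : Fin n | k ≤ v.val} := by
  ext v; simp

theorem Fin.setOf_le_val_and_val_lt_eq_empty {n : ℕ} {k m : ℕ} (hmk : m ≤ k) :
    {v : Fin n | k ≤ v.val ∧ v.val < m} = ∅ := by
  ext v; simp only [Set.mem_ofPred_eq, Set.mem_empty_iff_false, iff_false]; omega

theorem Fin.setOf_n_le_val_eq_empty {n : ℕ} : {v : Fin n | n ≤ v.val} = ∅ := by
  ext v; simp [v.isLt]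

/-- Vertices are `0`-indexed: the paper's `v_j` is `⟨j - 1, _⟩ : Fin n`, so
`V_{j',j} = {v | j' - 1 ≤ v.val ∧ v.val < j}` and `V \ V_j = {v | j ≤ v.val}`. -/
theorem sum_Lambda_telescopes {n : ℕ} (f : Set (Fin n) → ℝ)
    (α : ℕ → ℝ)
    (δ : ℝ)
    (h : ℕ) (hhn : h ≤ n) :
    ∑ j ∈ Finset.Icc (h + 1) n,
        ((α (h + 1) - δ) *
            (f {v : Fin n | h ≤ v.val ∧ v.val < j}
              - f {v : Fin n | h ≤ v.val ∧ v.val < j - 1})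
          + ∑ j' ∈ Finset.Icc (h + 2) n, (α j' - α (j' - 1)) *
              (f {v : Fin n | j' - 1 ≤ v.val ∧ v.val < j}
                - f {v : Fin n | j' - 1 ≤ v.val ∧ v.val < j - 1})) =
      (∑ j ∈ Finset.Icc (h + 1) n, α j *
          (f {v : Fin n | j - 1 ≤ v.val} - f {v : Fin n | j ≤ v.val}))
        - δ * (f {v : Fin n | h ≤ v.val} - f (∅ : Set (Fin n))) := by
  set β := Function.update α h δ
  have hβh : β h = δ := Function.update_self ..
  have hβ : ∀ k ∈ Icc (h + 1) n, β k = α k := fun k hk => Function.update_of_ne (by grind) _ _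
  set g : ℕ → ℕ → ℝ := fun i j => f {v : Fin n | i ≤ v.val ∧ v.val < j}
  set F : ℕ → ℝ := fun i => f {v : Fin n | i ≤ v.val}
  have hΛ : ∀ j ∈ Icc (h + 1) n,
      (α (h + 1) - δ) * (g h j - g h (j - 1))
        + ∑ j' ∈ Icc (h + 2) n, (α j' - α (j' - 1)) * (g (j' - 1) j - g (j' - 1) (j - 1)) =
      ∑ k ∈ Icc (h + 1) n, (β k - β (k - 1)) * (g (k - 1) j - g (k - 1) (j - 1)) := by
    intro j hj
    have hβ' : ∀ k ∈ Icc (h + 2) n, β k - β (k - 1) = α k - α (k - 1) := fun k hk => by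
      rw [hβ k (by grind), hβ (k - 1) (by grind)]
    rw [sum_Icc_succ_eq_add_sum_Icc (m := h) _ (by grind), hβ (h + 1) (by grind),
      Nat.add_sub_cancel, hβh, sum_congr rfl fun k hk => by rw [← hβ' k hk]]
  have hrow : ∀ k ∈ Icc (h + 1) n,
      ∑ j ∈ Icc (h + 1) n, (β k - β (k - 1)) * (g (k - 1) j - g (k - 1) (j - 1)) =
        (β k - β (k - 1)) * F (k - 1) - (β k - β (k - 1)) * f ∅ := by
    intro k hk
    rw [← mul_sum, sum_Icc_succ_sub_pred (g (k - 1)) hhn, mul_sub]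
    simp only [g, F, Fin.setOf_le_val_and_val_lt_n,
      Fin.setOf_le_val_and_val_lt_eq_empty (by grind : h ≤ k - 1)]
  rw [sum_congr rfl hΛ, sum_comm, sum_congr rfl hrow, sum_sub_distrib, ← sum_mul,
    sum_Icc_succ_sub_pred β hhn, sum_Icc_sub_pred_mul β F hhn,
    sum_congr rfl fun k hk => by rw [hβ k hk]]
  simp only [F, Fin.setOf_n_le_val_eq_empty, hβh]
  ring
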